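/- Let f : [0,1]×ℝ²→ℝ be continuous, let Γ ⊆ C₀, and let X : Γ → C¹₀ be a map. Define S : Γ → C₀ by S_t(ω) = ω(t) - ∫₀ᵗ f(s, X(ω)(s), X(ω)'(s)) ds. Then X(ω) satisfies X(ω)'(t) + ∫₀ᵗ f(s, X(ω)(s), X(ω)'(s)) ds = X(ω)'(0) + ω(t) for all t ∈ [0,1] and all ω ∈ Γ if and only if X(ω)(t) = Y_t(S(ω)) for all t ∈ [0,1] and all ω ∈ Γ. -/

import Mathlib

/-!
With `S = S(ω)`, both `X(ω)` and `Y(S)` vanish at `0` and `1`, and `Y(S)' = S - ∫₀¹ S`.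
If `X(ω)' = X(ω)'(0) + S`, then `X(ω) - Y(S)` has constant derivative on `[0,1]`, hence
is affine, and vanishing at both endpoints forces it to be zero. Conversely, if `X(ω) = Y(S)`
on `[0,1]`, uniqueness of one-sided derivatives on `[0,1]` gives `X(ω)' = S - ∫₀¹ S`, and
`S(0) = 0` turns this into the integral equation.
-/

open MeasureTheory

/-- `Y_t(ω) = -t ∫₀¹ ω(s) ds + ∫₀ᵗ ω(s) ds`. -/
noncomputable def Yw (ω : ℝ → ℝ) (t : ℝ) : ℝ :=
  -t * (∫ s in (0:ℝ)..1, ω s) + ∫ s in (0:ℝ)..t, ω s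

open Set

theorem hasDerivWithinAt_integral_Icc {E : Type*} [NormedAddCommGroup E] [NormedSpace ℝ E]
    [CompleteSpace E] {S : ℝ → E} {a b t : ℝ} (hS : ContinuousOn S (Icc a b))
    (ht : t ∈ Icc a b) :
    HasDerivWithinAt (fun u => ∫ s in a..u, S s) (S t) (Icc a b) t := by
  have : Fact (t ∈ Icc a b) := ⟨ht⟩
  have hsub : uIcc a t ⊆ Icc a b := by
    rw [uIcc_of_le ht.1]; exact Icc_subset_Icc le_rfl ht.2
  exact intervalIntegral.integral_hasDerivWithinAt_right ((hS.mono hsub).intervalIntegrable)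
    (hS.stronglyMeasurableAtFilter_nhdsWithin measurableSet_Icc t) (hS t ht)

theorem eq_of_hasDerivWithinAt_Icc_eq {f g f' : ℝ → ℝ} {a b : ℝ}
    (hf : ∀ x ∈ Icc a b, HasDerivWithinAt f (f' x) (Icc a b) x)
    (hg : ∀ x ∈ Icc a b, HasDerivWithinAt g (f' x) (Icc a b) x) (hfg : f a = g a) :
    ∀ x ∈ Icc a b, f x = g x := by
  have toIci : ∀ {h : ℝ → ℝ}, (∀ x ∈ Icc a b, HasDerivWithinAt h (f' x) (Icc a b) x) →
      ∀ x ∈ Ico a b, HasDerivWithinAt h (f' x) (Ici x) x := fun hh x hx =>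
    (hh x (mem_Icc_of_Ico hx)).mono_of_mem_nhdsWithin (Icc_mem_nhdsGE_of_mem hx)
  exact eq_of_has_deriv_right_eq (toIci hf) (toIci hg)
    (fun x hx => (hf x hx).continuousWithinAt) (fun x hx => (hg x hx).continuousWithinAt) hfg

theorem Yw_zero (S : ℝ → ℝ) : Yw S 0 = 0 := by
  simp [Yw]

theorem Yw_one (S : ℝ → ℝ) : Yw S 1 = 0 := by
  simp [Yw]

theorem hasDerivWithinAt_Yw {S : ℝ → ℝ} (hS : ContinuousOn S (Icc 0 1)) {t : ℝ}
    (ht : t ∈ Icc (0:ℝ) 1) :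
    HasDerivWithinAt (Yw S) (-(∫ s in (0:ℝ)..1, S s) + S t) (Icc 0 1) t := by
  have hlin : HasDerivWithinAt (fun u : ℝ => -u * ∫ s in (0:ℝ)..1, S s)
      (-(∫ s in (0:ℝ)..1, S s)) (Icc 0 1) t := by
    simpa using ((hasDerivWithinAt_id t (Icc 0 1)).neg).mul_const (∫ s in (0:ℝ)..1, S s)
  exact hlin.add (hasDerivWithinAt_integral_Icc hS ht)

theorem deriv_eq_deriv_zero_add_iff_eqOn_Yw {S X X' : ℝ → ℝ} (hS : ContinuousOn S (Icc 0 1))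
    (hS0 : S 0 = 0) (hX : ∀ t ∈ Icc (0:ℝ) 1, HasDerivWithinAt X (X' t) (Icc 0 1) t)
    (hX0 : X 0 = 0) (hX1 : X 1 = 0) :
    (∀ t ∈ Icc (0:ℝ) 1, X' t = X' 0 + S t) ↔ ∀ t ∈ Icc (0:ℝ) 1, X t = Yw S t := by
  set I := ∫ s in (0:ℝ)..1, S s
  constructor
  · intro hX'
    set c := X' 0 + I
    have hL : ∀ t ∈ Icc (0:ℝ) 1,
        HasDerivWithinAt (fun u => Yw S u + c * u) (X' t) (Icc 0 1) t := fun t ht =>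
      ((hasDerivWithinAt_Yw hS ht).add ((hasDerivWithinAt_id t _).const_mul c)).congr_deriv
        (by rw [hX' t ht]; ring)
    have hXL := eq_of_hasDerivWithinAt_Icc_eq hX hL (by simp [hX0, Yw_zero])
    have hc : 0 = c := by simpa [hX1, Yw_one] using hXL 1 ⟨zero_le_one, le_rfl⟩
    intro t ht
    simpa [← hc] using hXL t ht
  · intro hXY
    have hX'_eq : ∀ t ∈ Icc (0:ℝ) 1, X' t = -I + S t := fun t ht =>
      (uniqueDiffOn_Icc zero_lt_one t ht).eq_deriv _ (hX t ht)
        ((hasDerivWithinAt_Yw hS ht).congr hXY (hXY t ht))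
    intro t ht
    rw [hX'_eq t ht, hX'_eq 0 ⟨le_rfl, zero_le_one⟩, hS0, add_zero]

/-- `X(ω)` solves the integral equation for every `ω ∈ Γ` if and only if
`X(ω) = Y(S(ω))` on `[0,1]` for every `ω ∈ Γ`, where
`S_t(ω) = ω(t) - ∫₀ᵗ f(s, X(ω)(s), X(ω)'(s)) ds`. -/
theorem stmt13 (f : ℝ → ℝ → ℝ → ℝ)
    (hf : ContinuousOn (fun p : ℝ × ℝ × ℝ => f p.1 p.2.1 p.2.2)
      (Set.Icc 0 1 ×ˢ (Set.univ : Set (ℝ × ℝ))))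
    (Γ : Set (ℝ → ℝ))
    (hΓ : ∀ ω ∈ Γ, ContinuousOn ω (Set.Icc 0 1) ∧ ω 0 = 0)
    (X X' : (ℝ → ℝ) → ℝ → ℝ)
    (hX : ∀ ω ∈ Γ,
      (∀ t ∈ Set.Icc (0:ℝ) 1, HasDerivWithinAt (X ω) (X' ω t) (Set.Icc 0 1) t) ∧
      ContinuousOn (X' ω) (Set.Icc 0 1) ∧ X ω 0 = 0 ∧ X ω 1 = 0) :
    (∀ ω ∈ Γ, ∀ t ∈ Set.Icc (0:ℝ) 1,
        X' ω t + ∫ s in (0:ℝ)..t, f s (X ω s) (X' ω s) = X' ω 0 + ω t)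
    ↔ (∀ ω ∈ Γ, ∀ t ∈ Set.Icc (0:ℝ) 1,
        X ω t = Yw (fun τ => ω τ - ∫ s in (0:ℝ)..τ, f s (X ω s) (X' ω s)) t) := by
  refine forall₂_congr fun ω hω => ?_
  obtain ⟨hωc, hω0⟩ := hΓ ω hω
  obtain ⟨hXd, hX'c, hX0, hX1⟩ := hX ω hω
  have hXc : ContinuousOn (X ω) (Icc 0 1) := fun t ht => (hXd t ht).continuousWithinAt
  have hg : ContinuousOn (fun s => f s (X ω s) (X' ω s)) (Icc 0 1) :=
    hf.comp (continuousOn_id.prodMk (hXc.prodMk hX'c)) fun s hs => ⟨hs, trivial⟩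
  have hS :
      ContinuousOn (fun τ => ω τ - ∫ s in (0:ℝ)..τ, f s (X ω s) (X' ω s)) (Icc 0 1) :=
    hωc.sub fun t ht => (hasDerivWithinAt_integral_Icc hg ht).continuousWithinAt
  rw [← deriv_eq_deriv_zero_add_iff_eqOn_Yw hS (by simp [hω0]) hXd hX0 hX1]
  exact forall₂_congr fun t _ => by rw [← add_sub_assoc, eq_sub_iff_add_eq]
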